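/- arXiv:2407.16588 — 4 statements merged into one kernel-verified Lean document; each statement's English description precedes it below -/
import Mathlib

section
/- (Two-hop property) If S is a k-defective clique in G with |S| ≥ k+2, then for any two distinct vertices u, v ∈ S, either u and v are adjacent in G, or there exists w ∈ S adjacent to both u and v. In particular G[S] is connected with diameter at most 2. -/
open Finset

variable {V : Type*} [Fintype V] [DecidableEq V]

/-- The set of non-edges (missing edges) of the subgraph of `G` induced by `S`,
as a finset of unordered pairs. -/
def nonEdges (G : SimpleGraph V) [DecidableRel G.Adj] (S : Finset V) : Finset (Sym2 V) :=
  ((S ×ˢ S).filter fun p => p.1 ≠ p.2 ∧ ¬ G.Adj p.1 p.2).image fun p => s(p.1, p.2)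

/-- `S` is a `k`-defective clique: the complement of `G[S]` has at most `k` edges. -/
def IsDefClique (G : SimpleGraph V) [DecidableRel G.Adj] (k : ℕ) (S : Finset V) : Prop :=
  (nonEdges G S).card ≤ k

/-- `D` is a `k`-defective set: it is a `k`-defective clique in which every vertex
is non-adjacent to at least one other vertex of `D`. -/
def IsDefSet (G : SimpleGraph V) [DecidableRel G.Adj] (k : ℕ) (D : Finset V) : Prop :=
  (∀ u ∈ D, ∃ v ∈ D, v ≠ u ∧ ¬ G.Adj u v) ∧ IsDefClique G k D

lemma mem_nonEdges (G : SimpleGraph V) [DecidableRel G.Adj] {S : Finset V} {a b : V}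
    (ha : a ∈ S) (hb : b ∈ S) (hne : a ≠ b) (hadj : ¬ G.Adj a b) :
    s(a, b) ∈ nonEdges G S := by
  apply Finset.mem_image.mpr
  exact ⟨(a, b), Finset.mem_filter.mpr ⟨Finset.mem_product.mpr ⟨ha, hb⟩, hne, hadj⟩, rfl⟩

/-- Two-hop property: in a `k`-defective clique of size at least `k+2`, any two distinct
vertices are adjacent or have a common neighbor inside `S`; in particular the induced
subgraph is connected (with diameter at most 2). -/
theorem two_hop_property (G : SimpleGraph V) [DecidableRel G.Adj] (k : ℕ)
    (S : Finset V) (hS : IsDefClique G k S) (hcard : k + 2 ≤ S.card) :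
    (∀ u ∈ S, ∀ v ∈ S, u ≠ v → G.Adj u v ∨ ∃ w ∈ S, G.Adj u w ∧ G.Adj v w) ∧
      (G.induce (S : Set V)).Connected := by
  have main : ∀ u ∈ S, ∀ v ∈ S, u ≠ v →
      G.Adj u v ∨ ∃ w ∈ S, G.Adj u w ∧ G.Adj v w := by
    intro u hu v hv huv
    by_contra h
    push_neg at h
    obtain ⟨huvadj, hno⟩ := h
    set T := (S.erase u).erase v with hT
    have hTcard : k ≤ T.card := by
      have h1 : (S.erase u).card = S.card - 1 := Finset.card_erase_of_mem hu
      have h2 : T.card = (S.erase u).card - 1 :=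
        Finset.card_erase_of_mem (Finset.mem_erase.mpr ⟨Ne.symm huv, hv⟩)
      omega
    -- map each w in T to a nonedge
    set f : V → Sym2 V := fun w => if G.Adj u w then s(v, w) else s(u, w) with hf
    have hTmem : ∀ w ∈ T, w ∈ S ∧ w ≠ u ∧ w ≠ v := by
      intro w hw
      simp only [hT, Finset.mem_erase] at hw
      exact ⟨hw.2.2, hw.2.1, hw.1⟩
    have hsub : insert s(u, v) (T.image f) ⊆ nonEdges G S := by
      intro e he
      rcases Finset.mem_insert.mp he with rfl | he
      · exact mem_nonEdges G hu hv huv huvadj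
      · obtain ⟨w, hw, rfl⟩ := Finset.mem_image.mp he
        obtain ⟨hwS, hwu, hwv⟩ := hTmem w hw
        by_cases hadj : G.Adj u w
        · have hnadj : ¬ G.Adj v w := fun hvw => hno w hwS hadj hvw
          simp only [hf, if_pos hadj]
          exact mem_nonEdges G hv hwS hwv.symm hnadj
        · simp only [hf, if_neg hadj]
          exact mem_nonEdges G hu hwS hwu.symm hadj
    have hinj : Set.InjOn f T := by
      intro a ha b hb hab
      obtain ⟨haS, hau, hav⟩ := hTmem a ha
      obtain ⟨hbS, hbu, hbv⟩ := hTmem b hb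
      simp only [hf] at hab
      split_ifs at hab with h1 h2 h2 <;>
        · rw [Sym2.eq_iff] at hab
          rcases hab with ⟨h3, h4⟩ | ⟨h3, h4⟩ <;> subst_vars <;> simp_all
    have hnotmem : s(u, v) ∉ T.image f := by
      intro hmem
      obtain ⟨w, hw, hweq⟩ := Finset.mem_image.mp hmem
      obtain ⟨hwS, hwu, hwv⟩ := hTmem w hw
      simp only [hf] at hweq
      split_ifs at hweq with h1 <;>
        · rw [Sym2.eq_iff] at hweq
          rcases hweq with ⟨h3, h4⟩ | ⟨h3, h4⟩ <;> first
            | exact huv h3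
            | exact huv h3.symm
            | exact hwu h3
            | exact hwv h3
            | exact hwu h4
            | exact hwv h4
            | exact hwu h4.symm
            | exact hwv h4.symm
    have hcount : k + 1 ≤ (nonEdges G S).card := by
      calc k + 1 ≤ T.card + 1 := by omega
        _ = (T.image f).card + 1 := by rw [Finset.card_image_of_injOn hinj]
        _ = (insert s(u, v) (T.image f)).card := (Finset.card_insert_of_notMem hnotmem).symm
        _ ≤ (nonEdges G S).card := Finset.card_le_card hsub
    exact absurd hS (by simp [IsDefClique]; omega)
  refine ⟨main, ?_⟩
  have hSne : (S : Set V).Nonempty := by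
    have : 0 < S.card := by omega
    exact Finset.card_pos.mp this
  rw [SimpleGraph.connected_iff]
  constructor
  · intro a b
    obtain ⟨a, ha⟩ := a
    obtain ⟨b, hb⟩ := b
    have ha' : a ∈ S := ha
    have hb' : b ∈ S := hb
    by_cases hab : a = b
    · subst hab; rfl
    · rcases main a ha' b hb' hab with hadj | ⟨w, hw, hadj1, hadj2⟩
      · exact SimpleGraph.Adj.reachable (by exact hadj)
      · have r1 : (G.induce (S : Set V)).Adj ⟨a, ha⟩ ⟨w, hw⟩ := hadj1
        have r2 : (G.induce (S : Set V)).Adj ⟨w, hw⟩ ⟨b, hb⟩ := hadj2.symm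
        exact r1.reachable.trans r2.reachable
  · exact ⟨⟨hSne.choose, hSne.choose_spec⟩⟩
end

section
/- (Coloring bound) Let I = (G, P, R) and suppose V \ P is partitioned into χ independent sets Π_1, …, Π_χ of G. Then for every k-defective clique Q ⊆ V with P ⊆ Q, |Q| ≤ |P| + Σ_{j=1}^{χ} min(⌊(1+√(8k+1))/2⌋, |Π_j|). -/
open Finset

variable {V : Type*} [Fintype V] [DecidableEq V]

/-!
A `k`-defective clique `Q` meets each independent set `Π` in a set all of whose pairs are
non-edges of `G[Q]`, so `C(|Q ∩ Π|, 2) ≤ k`, which solves to `|Q ∩ Π| ≤ ⌊(1 + √(8k+1))/2⌋`.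
Summing over the colour classes, together with the trivial bound `|Q ∩ Π| ≤ |Π|`, gives the claim.
-/

theorem le_floor_of_choose_two_le {m k : ℕ} (h : m.choose 2 ≤ k) :
    m ≤ ⌊(1 + √(8 * (k : ℝ) + 1)) / 2⌋₊ := by
  have hchoose : (m : ℝ) * (m - 1) / 2 ≤ k := by
    rw [← Nat.cast_choose_two]
    exact_mod_cast h
  have hsqrt : 2 * (m : ℝ) - 1 ≤ √(8 * (k : ℝ) + 1) :=
    Real.le_sqrt_of_sq_le (by nlinarith)
  apply Nat.le_floor
  rw [le_div_iff₀ two_pos]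
  linarith

theorem Finset.card_le_card_add_sum_card_inter {α ι : Type*} [DecidableEq α] {P Q : Finset α}
    {s : Finset ι} {Parts : ι → Finset α} (hcover : Q \ P ⊆ s.biUnion Parts) :
    Q.card ≤ P.card + ∑ i ∈ s, (Q ∩ Parts i).card := by
  have hsdiff : Q \ P ⊆ s.biUnion fun i => Q ∩ Parts i := by
    rw [← inter_biUnion]
    exact subset_inter sdiff_subset hcover
  calc Q.card = (Q ∩ P).card + (Q \ P).card := (card_inter_add_card_sdiff Q P).symm
    _ ≤ P.card + (s.biUnion fun i => Q ∩ Parts i).card :=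
      add_le_add (card_le_card inter_subset_right) (card_le_card hsdiff)
    _ ≤ P.card + ∑ i ∈ s, (Q ∩ Parts i).card := by gcongr; exact card_biUnion_le

theorem choose_two_le_card_nonEdges {α : Type*} [DecidableEq α] {G : SimpleGraph α}
    [DecidableRel G.Adj] {I S : Finset α} (hIS : I ⊆ S) (hI : G.IsIndepSet (I : Set α)) :
    I.card.choose 2 ≤ (nonEdges G S).card := by
  rw [← Sym2.card_image_offDiag]
  refine card_le_card fun e he => ?_
  obtain ⟨⟨u, v⟩, huv, rfl⟩ := mem_image.1 he
  obtain ⟨hu, hv, hne⟩ := mem_offDiag.1 huv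
  exact mem_image.2 ⟨(u, v), mem_filter.2 ⟨mem_product.2 ⟨hIS hu, hIS hv⟩, hne, hI hu hv hne⟩, rfl⟩

theorem IsDefClique.card_inter_le {α : Type*} [DecidableEq α] {G : SimpleGraph α}
    [DecidableRel G.Adj] {k : ℕ} {Q I : Finset α} (hQ : IsDefClique G k Q)
    (hI : G.IsIndepSet (I : Set α)) :
    (Q ∩ I).card ≤ ⌊(1 + √(8 * (k : ℝ) + 1)) / 2⌋₊ :=
  le_floor_of_choose_two_le <|
    (choose_two_le_card_nonEdges inter_subset_left (hI.mono (coe_subset.2 inter_subset_right))).trans hQ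

theorem coloring_bound_general (G : SimpleGraph V) [DecidableRel G.Adj] (k : ℕ) (P : Finset V)
    (χ : ℕ) (Parts : Fin χ → Finset V)
    (hcover : Finset.univ \ P = Finset.univ.biUnion Parts)
    (hind : ∀ i, ∀ u ∈ Parts i, ∀ v ∈ Parts i, u ≠ v → ¬ G.Adj u v)
    (Q : Finset V) (hQ : IsDefClique G k Q) :
    Q.card ≤ P.card +
      ∑ i : Fin χ, min (Nat.floor ((1 + Real.sqrt (8 * (k : ℝ) + 1)) / 2)) (Parts i).card := by
  have hQcover : Q \ P ⊆ univ.biUnion Parts := hcover ▸ sdiff_subset_sdiff (subset_univ Q) le_rfl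
  calc Q.card ≤ P.card + ∑ i, (Q ∩ Parts i).card := card_le_card_add_sum_card_inter hQcover
    _ ≤ _ := by
      gcongr with i
      exact le_min (hQ.card_inter_le (hind i)) (card_le_card inter_subset_right)

/-- Coloring bound: if `V \ P` is partitioned into `χ` independent sets `Parts 1, …, Parts χ`,
then every `k`-defective clique `Q ⊇ P` satisfies
`|Q| ≤ |P| + Σ_j min(⌊(1+√(8k+1))/2⌋, |Parts j|)`. -/
theorem coloring_bound (G : SimpleGraph V) [DecidableRel G.Adj] (k : ℕ) (P : Finset V)
    (χ : ℕ) (Parts : Fin χ → Finset V)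
    (hdisj : ∀ i j, i ≠ j → Disjoint (Parts i) (Parts j))
    (hcover : Finset.univ \ P = Finset.univ.biUnion Parts)
    (hind : ∀ i, ∀ u ∈ Parts i, ∀ v ∈ Parts i, u ≠ v → ¬ G.Adj u v)
    (Q : Finset V) (hQ : IsDefClique G k Q) (hPQ : P ⊆ Q) :
    Q.card ≤ P.card +
      ∑ i : Fin χ, min (Nat.floor ((1 + Real.sqrt (8 * (k : ℝ) + 1)) / 2)) (Parts i).card :=
  coloring_bound_general G k P χ Parts hcover hind Q hQ
end

section
/- (Packing bound) Let P ⊆ V be a k-defective clique with r(P) = k − |E(complement of G[P])| ≥ 0. For v ∈ V \ P define w(v) = |P| − |N(v) ∩ P|. Sort V \ P as v_1, …, v_m in non-decreasing order of weight, and let i* be the largest index i with Σ_{j=1}^{i} w(v_j) ≤ r(P). Then every k-defective clique Q with P ⊆ Q satisfies |Q| ≤ |P| + i*. -/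
/-!
Each `v ∈ Q \ P` has exactly `w v` non-neighbours in `P`; the resulting non-edges `{v, u}` of
`G[Q]` are distinct for distinct `v` (as `v ∉ P`, `u ∈ P`) and none of them lies inside `P`.
Hence `∑_{v ∈ Q \ P} w v ≤ r(P)`. A sorted prefix of length `|Q \ P|` has the smallest
weight among all `|Q \ P|`-subsets of `V \ P`, so it fits within `r(P)` as well, and the
maximality of `i*` gives `|Q \ P| ≤ i*`.
-/

open Finset

variable {V : Type*} [Fintype V] [DecidableEq V]

namespace Finset

variable {ι M : Type*} [AddCommMonoid M] [LinearOrder M] [IsOrderedAddMonoid M]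

theorem sum_le_sum_of_card_eq_of_forall_le {s t : Finset ι} {f : ι → M} (hst : #s = #t)
    (h : ∀ i ∈ s, ∀ j ∈ t, f i ≤ f j) : ∑ i ∈ s, f i ≤ ∑ j ∈ t, f j := by
  obtain rfl | ⟨j₀, hj₀, hmin⟩ := t.eq_empty_or_nonempty.imp id (t.exists_min_image f)
  · simp [card_eq_zero.mp hst]
  calc ∑ i ∈ s, f i ≤ #s • f j₀ := sum_le_card_nsmul s f _ fun i hi ↦ h i hi j₀ hj₀
    _ = #t • f j₀ := by rw [hst]
    _ ≤ ∑ j ∈ t, f j := card_nsmul_le_sum t f _ hmin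

end Finset

namespace List

open Finset

variable {ι M : Type*} [DecidableEq ι] [AddCommMonoid M] [LinearOrder M] [IsOrderedAddMonoid M]

theorem sum_map_take_le_sum_of_pairwise {f : ι → M} {l : List ι} (hnd : l.Nodup)
    (hsort : l.Pairwise fun a b ↦ f a ≤ f b) {T : Finset ι} (hT : T ⊆ l.toFinset) :
    ((l.take #T).map f).sum ≤ ∑ j ∈ T, f j := by
  have hTl : #T ≤ l.length := (card_le_card hT).trans (toFinset_card_of_nodup hnd).le
  set pre := (l.take #T).toFinset
  have hnd_pre : (l.take #T).Nodup := hnd.sublist (take_sublist _ l)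
  have hcard : #pre = #T := by
    rw [toFinset_card_of_nodup hnd_pre, length_take, min_eq_left hTl]
  have hexchange : ∑ i ∈ pre \ T, f i ≤ ∑ j ∈ T \ pre, f j := by
    refine sum_le_sum_of_card_eq_of_forall_le (card_sdiff_comm hcard) fun i hi j hj ↦ ?_
    rw [mem_sdiff, mem_toFinset] at hi hj
    have hjl : j ∈ l.take #T ++ l.drop #T := by
      rw [take_append_drop, ← mem_toFinset]; exact hT hj.1
    exact hsort.rel_of_mem_take_of_mem_drop hi.1 ((mem_append.mp hjl).resolve_left hj.2)
  calc ((l.take #T).map f).sum = ∑ i ∈ pre ∩ T, f i + ∑ i ∈ pre \ T, f i := by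
        rw [sum_inter_add_sum_sdiff, sum_toFinset f hnd_pre]
    _ ≤ ∑ j ∈ T ∩ pre, f j + ∑ j ∈ T \ pre, f j := by rw [inter_comm]; gcongr
    _ = ∑ j ∈ T, f j := sum_inter_add_sum_sdiff T pre f

end List

section NonEdges

variable {G : SimpleGraph V} [DecidableRel G.Adj] {S P Q : Finset V}

omit [Fintype V] in
lemma mem_nonEdges_s7 {e : Sym2 V} :
    e ∈ nonEdges G S ↔ ∃ a ∈ S, ∃ b ∈ S, a ≠ b ∧ ¬ G.Adj a b ∧ e = s(a, b) := by
  simp only [nonEdges, mem_image, mem_filter, mem_product, Prod.exists]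
  constructor
  · rintro ⟨a, b, ⟨⟨ha, hb⟩, hne, hadj⟩, rfl⟩
    exact ⟨a, ha, b, hb, hne, hadj, rfl⟩
  · rintro ⟨a, ha, b, hb, hne, hadj, rfl⟩
    exact ⟨a, b, ⟨⟨ha, hb⟩, hne, hadj⟩, rfl⟩

omit [Fintype V] in
lemma nonEdges_mono (hPQ : P ⊆ Q) : nonEdges G P ⊆ nonEdges G Q := by
  intro e he
  obtain ⟨a, ha, b, hb, hne, hadj, rfl⟩ := mem_nonEdges_s7.mp he
  exact mem_nonEdges_s7.mpr ⟨a, hPQ ha, b, hPQ hb, hne, hadj, rfl⟩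

variable (G) in
def crossNonEdges (P Q : Finset V) : Finset (Σ _ : V, V) :=
  (Q \ P).sigma fun v ↦ P \ G.neighborFinset v

lemma card_crossNonEdges :
    #(crossNonEdges G P Q) = ∑ v ∈ Q \ P, #(P \ G.neighborFinset v) :=
  card_sigma _ _

lemma mem_crossNonEdges {x : Σ _ : V, V} :
    x ∈ crossNonEdges G P Q ↔ (x.1 ∈ Q ∧ x.1 ∉ P) ∧ x.2 ∈ P ∧ ¬ G.Adj x.1 x.2 := by
  simp [crossNonEdges, SimpleGraph.mem_neighborFinset]

lemma image_crossNonEdges_subset (hPQ : P ⊆ Q) :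
    (crossNonEdges G P Q).image (fun x ↦ s(x.1, x.2)) ⊆ nonEdges G Q := by
  intro e he
  obtain ⟨⟨v, u⟩, hx, rfl⟩ := mem_image.mp he
  obtain ⟨⟨hvQ, hvP⟩, huP, hadj⟩ := mem_crossNonEdges.mp hx
  exact mem_nonEdges_s7.mpr ⟨v, hvQ, u, hPQ huP, fun h ↦ hvP (h ▸ huP), hadj, rfl⟩

lemma injOn_crossNonEdges :
    Set.InjOn (fun x : Σ _ : V, V ↦ s(x.1, x.2)) (crossNonEdges G P Q) := by
  rintro ⟨v₁, u₁⟩ hx₁ ⟨v₂, u₂⟩ hx₂ heq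
  rw [mem_coe, mem_crossNonEdges] at hx₁ hx₂
  rcases Sym2.eq_iff.mp heq with ⟨rfl, rfl⟩ | ⟨rfl, -⟩
  · rfl
  · exact absurd hx₂.2.1 hx₁.1.2

lemma disjoint_nonEdges_image_crossNonEdges :
    Disjoint (nonEdges G P) ((crossNonEdges G P Q).image fun x ↦ s(x.1, x.2)) := by
  refine disjoint_left.mpr fun e heP he ↦ ?_
  obtain ⟨a, haP, b, hbP, -, -, rfl⟩ := mem_nonEdges_s7.mp heP
  obtain ⟨⟨v, u⟩, hx, heq⟩ := mem_image.mp he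
  have hvP := (mem_crossNonEdges.mp hx).1.2
  rcases Sym2.eq_iff.mp heq with ⟨rfl, -⟩ | ⟨rfl, -⟩
  exacts [hvP haP, hvP hbP]

theorem card_nonEdges_add_sum_le (hPQ : P ⊆ Q) :
    #(nonEdges G P) + ∑ v ∈ Q \ P, (#P - #(G.neighborFinset v ∩ P)) ≤ #(nonEdges G Q) := by
  simp_rw [← card_sdiff, ← card_crossNonEdges, ← card_image_of_injOn injOn_crossNonEdges,
    ← card_union_of_disjoint disjoint_nonEdges_image_crossNonEdges]
  exact card_le_card (union_subset (nonEdges_mono hPQ) (image_crossNonEdges_subset hPQ))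

end NonEdges

theorem packing_bound_general (G : SimpleGraph V) [DecidableRel G.Adj] (k : ℕ) (P : Finset V)
    (w : V → ℕ) (hw : ∀ v, w v = P.card - (G.neighborFinset v ∩ P).card)
    (l : List V) (hnd : l.Nodup) (hmem : ∀ v, v ∈ l ↔ v ∉ P)
    (hsort : l.Pairwise fun a b => w a ≤ w b)
    (istar : ℕ)
    (h2 : ∀ i ≤ l.length, ((l.take i).map w).sum ≤ k - (nonEdges G P).card → i ≤ istar)
    (Q : Finset V) (hQ : IsDefClique G k Q) (hPQ : P ⊆ Q) :
    Q.card ≤ P.card + istar := by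
  have hsub : Q \ P ⊆ l.toFinset := fun v hv ↦ by
    rw [List.mem_toFinset, hmem]; exact (mem_sdiff.mp hv).2
  have hlen : #(Q \ P) ≤ l.length :=
    (card_le_card hsub).trans (List.toFinset_card_of_nodup hnd).le
  have hbudget : ∑ v ∈ Q \ P, w v ≤ k - #(nonEdges G P) := by
    have hcount := (card_nonEdges_add_sum_le (G := G) hPQ).trans hQ
    simp_rw [hw]; omega
  have hprefix := List.sum_map_take_le_sum_of_pairwise hnd hsort hsub
  have hmax : #(Q \ P) ≤ istar := h2 _ hlen (hprefix.trans hbudget)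
  have hsplit : #(Q \ P) + #P = #Q := card_sdiff_add_card_eq_card hPQ
  omega

/-- Packing bound: sort `V \ P` as `v_1, …, v_m` by non-decreasing weight
`w(v) = |P| - |N(v) ∩ P|`; if `i*` is the largest `i` with `Σ_{j≤i} w(v_j) ≤ r(P)`,
then every `k`-defective clique `Q ⊇ P` has `|Q| ≤ |P| + i*`. -/
theorem packing_bound (G : SimpleGraph V) [DecidableRel G.Adj] (k : ℕ) (P : Finset V)
    (hP : IsDefClique G k P)
    (w : V → ℕ) (hw : ∀ v, w v = P.card - (G.neighborFinset v ∩ P).card)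
    (l : List V) (hnd : l.Nodup) (hmem : ∀ v, v ∈ l ↔ v ∉ P)
    (hsort : l.Pairwise fun a b => w a ≤ w b)
    (istar : ℕ) (histar : istar ≤ l.length)
    (h1 : ((l.take istar).map w).sum ≤ k - (nonEdges G P).card)
    (h2 : ∀ i ≤ l.length, ((l.take i).map w).sum ≤ k - (nonEdges G P).card → i ≤ istar)
    (Q : Finset V) (hQ : IsDefClique G k Q) (hPQ : P ⊆ Q) :
    Q.card ≤ P.card + istar :=
  packing_bound_general G k P w hw l hnd hmem hsort istar h2 Q hQ hPQ
end

section
/- (Graph decomposition lemma) Let v_1, …, v_n be any ordering of V, and let Q be a k-defective clique with |Q| ≥ k+2. Let v_i be the vertex of Q with smallest index. Then Q ⊆ {v_i} ∪ N^+(v_i) ∪ N^{2+}(v_i), where N^+(v_i) = N(v_i) ∩ {v_{i+1}, …, v_n} and N^{2+}(v_i) = (⋃_{w∈N^+(v_i)} N(w)) ∩ {v_{i+1}, …, v_n} \ N^+(v_i). -/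
open Finset

variable {V : Type*} [Fintype V] [DecidableEq V]

/-!
If `a, b ∈ Q` are non-adjacent and have no common neighbour in `Q`, then every other `z ∈ Q`
misses `a` or `b`, so `Q` has at least `|Q| - 1 ≥ k + 1` non-edges. Hence in a `k`-defective
clique of size at least `k + 2` non-adjacent vertices have a common neighbour, and the smallest
vertex of `Q` reaches every vertex of `Q` in at most two steps, all inside `Q`, hence through
vertices of larger index.
-/

section

variable {W : Type*} [DecidableEq W]

lemma mk_mem_nonEdges {G : SimpleGraph W} [DecidableRel G.Adj] {S : Finset W} {a b : W}
    (ha : a ∈ S) (hb : b ∈ S) (hab : a ≠ b) (hadj : ¬ G.Adj a b) :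
    s(a, b) ∈ nonEdges G S := by
  simp only [nonEdges, mem_image, mem_filter, mem_product]
  exact ⟨(a, b), ⟨⟨ha, hb⟩, hab, hadj⟩, rfl⟩

lemma IsDefClique.exists_adj_adj_of_not_adj {G : SimpleGraph W} [DecidableRel G.Adj] {k : ℕ}
    {Q : Finset W} (hQ : IsDefClique G k Q) (hcard : k + 2 ≤ #Q) {a b : W}
    (ha : a ∈ Q) (hb : b ∈ Q) (hab : a ≠ b) (hnadj : ¬ G.Adj a b) :
    ∃ w ∈ Q, G.Adj a w ∧ G.Adj w b := by
  by_contra! hno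
  -- Each `z ∈ Q.erase a` is sent to a non-edge at `z`; `b` itself goes to `s(a, b)`.
  let f : W → Sym2 W := fun z => if G.Adj a z then s(b, z) else s(a, z)
  have hf_mem : ∀ z ∈ Q.erase a, f z ∈ nonEdges G Q := by
    intro z hz
    obtain ⟨hza, hzQ⟩ := mem_erase.mp hz
    by_cases haz : G.Adj a z
    · have hzb : z ≠ b := by rintro rfl; exact hnadj haz
      simpa [f, haz] using mk_mem_nonEdges hb hzQ hzb.symm fun h => hno z hzQ haz h.symm
    · simpa [f, haz] using mk_mem_nonEdges ha hzQ hza.symm haz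
  have hf_self : ∀ z, z ∈ f z := fun z => by
    by_cases haz : G.Adj a z <;> simp [f, haz]
  have hf_other : ∀ z z', z ∈ f z' → z = a ∨ z = b ∨ z = z' := fun z z' h => by
    by_cases haz : G.Adj a z' <;> simp only [f, haz, if_true, if_false, Sym2.mem_iff] at h <;> tauto
  have hf_inj : Set.InjOn f (Q.erase a) := by
    intro z hz z' hz' hzz'
    have h₁ := hf_other z z' (hzz' ▸ hf_self z)
    have h₂ := hf_other z' z (hzz' ▸ hf_self z')
    have hza := (mem_erase.mp hz).1
    have hz'a := (mem_erase.mp hz').1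
    grind
  have hle := card_le_card_of_injOn f hf_mem hf_inj
  rw [card_erase_of_mem ha] at hle
  unfold IsDefClique at hQ
  omega

end

/-- Graph decomposition lemma: for any ordering of `V` (given by an injective index
function `idx`), if `Q` is a `k`-defective clique with `|Q| ≥ k+2` and `vi` is its
vertex of smallest index, then `Q ⊆ {vi} ∪ N⁺(vi) ∪ N²⁺(vi)`. -/
theorem graph_decomposition (G : SimpleGraph V) [DecidableRel G.Adj] (k : ℕ)
    (idx : V → ℕ) (hinj : Function.Injective idx)
    (Q : Finset V) (hQ : IsDefClique G k Q) (hcard : k + 2 ≤ Q.card)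
    (vi : V) (hvi : vi ∈ Q) (hmin : ∀ u ∈ Q, idx vi ≤ idx u) :
    Q ⊆ insert vi
      ((Finset.univ.filter fun u => G.Adj vi u ∧ idx vi < idx u) ∪
        (Finset.univ.filter fun u => idx vi < idx u ∧ ¬ G.Adj vi u ∧
          ∃ w, (G.Adj vi w ∧ idx vi < idx w) ∧ G.Adj w u)) := by
  have hlater : ∀ w ∈ Q, w ≠ vi → idx vi < idx w := fun w hw hne =>
    (hmin w hw).lt_of_ne (hinj.ne hne.symm)
  intro u hu
  simp only [mem_insert, mem_union, mem_filter, mem_univ, true_and]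
  rcases eq_or_ne u vi with rfl | huv
  · exact .inl rfl
  by_cases hadj : G.Adj vi u
  · exact .inr (.inl ⟨hadj, hlater u hu huv⟩)
  obtain ⟨w, hwQ, hvw, hwu⟩ := hQ.exists_adj_adj_of_not_adj hcard hvi hu huv.symm hadj
  exact .inr (.inr ⟨hlater u hu huv, hadj, w, ⟨hvw, hlater w hwQ hvw.ne'⟩, hwu⟩)
end
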